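/- arXiv:1302.6700 — 4 statements merged into one kernel-verified Lean document; each statement's English description precedes it below -/
import Mathlib

section
/- Let F be an MHR distribution with inverse hazard rate λ, and fix 0 ≤ α ≤ 1. For positive values v1, v2 with positive α-virtual values φα(vi) = vi - α·λ(vi), if v1/v2 < φα(v1)/φα(v2) then v1 > v2. -/
/-- For MHR values, if the ratio of values is strictly less than the
ratio of the (positive) α-virtual values, then v1 > v2. -/
theorem ratio_virtual_implies_larger
    (F f lam : ℝ → ℝ) (α : ℝ)
    (hF : ∀ v, 0 ≤ F v ∧ F v ≤ 1)
    (hf : ∀ v, 0 < f v)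
    (hlam : ∀ v, lam v = (1 - F v) / f v)
    (hMHR : ∀ ⦃a b : ℝ⦄, a ≤ b → lam b ≤ lam a)
    (hα0 : 0 ≤ α) (hα1 : α ≤ 1)
    (φα : ℝ → ℝ) (hφα : ∀ v, φα v = v - α * lam v)
    (v1 v2 : ℝ) (hv1 : 0 < v1) (hv2 : 0 < v2)
    (hφ1 : 0 < φα v1) (hφ2 : 0 < φα v2)
    (hratio : v1 / v2 < φα v1 / φα v2) :
    v1 > v2 := by
  by_contra h
  push_neg at h
  have hl : lam v2 ≤ lam v1 := hMHR h
  have hl2 : 0 ≤ lam v2 := by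
    rw [hlam]
    exact div_nonneg (by linarith [(hF v2).2]) (hf v2).le
  have key : φα v1 / φα v2 ≤ v1 / v2 := by
    rw [div_le_div_iff₀ hφ2 hv2, hφα v1, hφα v2]
    nlinarith [mul_nonneg (mul_nonneg hα0 (by linarith : (0:ℝ) ≤ lam v1 - lam v2)) hv2.le, mul_nonneg (mul_nonneg hα0 hl2) (by linarith : (0:ℝ) ≤ v2 - v1)]
  linarith
end

section
/- Let λ be the inverse hazard rate of an MHR distribution and φα(v) = v - α·λ(v) for 0 ≤ α ≤ 1. Suppose p1, p2, q1, q2 ∈ (0,1] are relevances such that the pair (p1,p2) is spread or flipped with respect to (q1,q2), meaning either p1/p2 ≥ q1/q2 ≥ 1, or 1 ≥ q1/q2 ≥ p1/p2, or p1/p2 ≥ 1 ≥ q1/q2, or q1/q2 ≥ 1 ≥ p1/p2. If p1·v1 < p2·v2 and p1·φα(v1) ≥ p2·φα(v2) > 0 for positive values v1, v2, then q1·φα(v1) ≥ q2·φα(v2). -/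
/-- Key lemma — if under the refined (spread-or-flipped) relevances
advertiser 1 has lower realized value but higher positive realized α-virtual value,
then the same α-virtual ranking holds under the coarse relevances. -/
theorem inefficient_with_refined_implies_inefficient_with_coarse
    (F f lam : ℝ → ℝ) (α : ℝ)
    (hF : ∀ v, 0 ≤ F v ∧ F v ≤ 1)
    (hf : ∀ v, 0 < f v)
    (hlam : ∀ v, lam v = (1 - F v) / f v)
    (hMHR : ∀ ⦃a b : ℝ⦄, a ≤ b → lam b ≤ lam a)
    (hα0 : 0 ≤ α) (hα1 : α ≤ 1)
    (φα : ℝ → ℝ) (hφα : ∀ v, φα v = v - α * lam v)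
    (p1 p2 q1 q2 : ℝ)
    (hp1 : 0 < p1) (hp1' : p1 ≤ 1) (hp2 : 0 < p2) (hp2' : p2 ≤ 1)
    (hq1 : 0 < q1) (hq1' : q1 ≤ 1) (hq2 : 0 < q2) (hq2' : q2 ≤ 1)
    (hsf : (p1 / p2 ≥ q1 / q2 ∧ q1 / q2 ≥ 1) ∨ (1 ≥ q1 / q2 ∧ q1 / q2 ≥ p1 / p2) ∨
           (p1 / p2 ≥ 1 ∧ 1 ≥ q1 / q2) ∨ (q1 / q2 ≥ 1 ∧ 1 ≥ p1 / p2))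
    (v1 v2 : ℝ) (hv1 : 0 < v1) (hv2 : 0 < v2)
    (hval : p1 * v1 < p2 * v2)
    (hvv : p1 * φα v1 ≥ p2 * φα v2) (hvv2 : p2 * φα v2 > 0) :
    q1 * φα v1 ≥ q2 * φα v2 := by
  have hφ2 : 0 < φα v2 := by
    by_contra h
    push_neg at h
    nlinarith [mul_nonneg hp2.le (neg_nonneg.mpr h)]
  have hφ1 : 0 < φα v1 := by
    by_contra h
    push_neg at h
    nlinarith [mul_nonneg hp1.le (neg_nonneg.mpr h)]
  have hlamnn : ∀ v, 0 ≤ lam v := fun v => by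
    rw [hlam]; exact div_nonneg (by linarith [(hF v).2]) (hf v).le
  have h21 : v2 ≤ v1 := by
    by_contra h
    push_neg at h
    have hl := hMHR h.le
    have hl2 := hlamnn v2
    have key : φα v1 * v2 ≤ φα v2 * v1 := by
      rw [hφα, hφα]
      nlinarith [mul_nonneg hα0 (sub_nonneg.mpr hl), mul_nonneg hα0 hl2]
    nlinarith [mul_lt_mul_of_pos_right hval hφ1,
      mul_le_mul_of_nonneg_right hvv hv1.le,
      mul_le_mul_of_nonneg_left key hp2.le]
  have hφ12 : φα v2 ≤ φα v1 := by
    rw [hφα, hφα]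
    have hl := hMHR h21
    nlinarith [mul_nonneg hα0 (sub_nonneg.mpr hl)]
  rcases hsf with ⟨h1, h2⟩ | ⟨h1, h2⟩ | ⟨h1, h2⟩ | ⟨h1, h2⟩
  · have hq : q2 ≤ q1 := by
      have := (one_le_div hq2).mp h2
      linarith
    nlinarith
  · have h2' : p1 * q2 ≤ q1 * p2 := (div_le_div_iff₀ hp2 hq2).mp h2
    nlinarith [mul_le_mul_of_nonneg_right h2' hφ1.le,
      mul_le_mul_of_nonneg_right hvv hq2.le]
  · exfalso
    have hp : p2 ≤ p1 := (one_le_div hp2).mp h1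
    nlinarith
  · have hq : q2 ≤ q1 := (one_le_div hq2).mp h1
    nlinarith
end

section
/- Let r : Fin n → ℝ be non-increasing (r 1 ≥ ... ≥ r n) and s : Fin n → ℝ be non-increasing and nonnegative. Let σ1, σ2 be permutations of Fin n such that σ1 is more ordered than σ2 with respect to r, i.e., for all i < j (so r i ≥ r j), if σ2(i) < σ2(j) then σ1(i) < σ1(j). Then Σ_x s(x)·r(σ1⁻¹(x)) ≥ Σ_x s(x)·r(σ2⁻¹(x)). -/
/-!
Call `σ₁` more ordered than `σ₂` when every inversion of `σ₁` is an inversion of `σ₂`.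
If `σ₁ ≠ σ₂`, some inversion of `σ₂` that is not one of `σ₁` sits at adjacent values `a ⋖ b`;
otherwise `σ₁ σ₂⁻¹` would increase at every step and be the identity. Composing `σ₂` with the
transposition `(a b)` removes exactly that inversion, keeps `σ₁` more ordered, and changes the
sum by `(s a - s b) (r (σ₂⁻¹ b) - r (σ₂⁻¹ a)) ≥ 0`. Induction on the number of inversions of `σ₂`
concludes.
-/

open Finset Equiv

variable {α : Type*} [LinearOrder α]

theorem lt_or_eq_and_eq_of_swap_apply_lt_swap_apply {a b u v : α} (hab : a ⋖ b)
    (h : swap a b u < swap a b v) : u < v ∨ u = b ∧ v = a := by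
  have hlt := hab.lt
  have hge : ∀ {c}, a < c → b ≤ c := hab.ge_of_gt
  have hle : ∀ {c}, c < b → c ≤ a := hab.le_of_lt
  rw [swap_apply_def, swap_apply_def] at h
  split_ifs at h <;> grind

section Sum

variable [Fintype α]

theorem sum_mul_comp_swap_sub_sum_mul {R : Type*} [CommRing R] (f g : α → R) (a b : α) :
    ∑ x, f x * g (swap a b x) - ∑ x, f x * g x = (f a - f b) * (g b - g a) := by
  rcases eq_or_ne a b with rfl | hab
  · simp
  rw [← sum_sub_distrib, Fintype.sum_eq_add a b hab fun x hx => by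
    rw [swap_apply_of_ne_of_ne hx.1 hx.2, sub_self]]
  simp only [swap_apply_left, swap_apply_right]
  ring

theorem sum_mul_le_sum_mul_comp_swap {R : Type*} [CommRing R] [LinearOrder R]
    [IsStrictOrderedRing R] {f g : α → R} {a b : α} (hf : f b ≤ f a) (hg : g a ≤ g b) :
    ∑ x, f x * g x ≤ ∑ x, f x * g (swap a b x) := by
  have hdiff := sum_mul_comp_swap_sub_sum_mul f g a b
  have hnonneg : 0 ≤ (f a - f b) * (g b - g a) := mul_nonneg (sub_nonneg.2 hf) (sub_nonneg.2 hg)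
  linarith

end Sum

namespace Equiv.Perm

def inversions [Fintype α] (σ : Perm α) : Finset (α × α) :=
  univ.filter fun p => p.1 < p.2 ∧ σ p.2 < σ p.1

@[simp]
theorem mem_inversions [Fintype α] {σ : Perm α} {p : α × α} :
    p ∈ σ.inversions ↔ p.1 < p.2 ∧ σ p.2 < σ p.1 := by
  simp [inversions]

def MoreOrdered (σ₁ σ₂ : Perm α) : Prop :=
  ∀ ⦃i j⦄, i < j → σ₂ i < σ₂ j → σ₁ i < σ₁ j

theorem card_inversions_swap_mul_lt [Fintype α] {σ : Perm α} {a b : α} (hab : a ⋖ b)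
    (hinv : σ⁻¹ b < σ⁻¹ a) : #(swap a b * σ).inversions < #σ.inversions := by
  refine card_lt_card <| (ssubset_iff_of_subset fun p hp => ?_).2 ⟨(σ⁻¹ b, σ⁻¹ a), ?_, ?_⟩
  · simp only [mem_inversions, mul_apply] at hp ⊢
    refine ⟨hp.1, (lt_or_eq_and_eq_of_swap_apply_lt_swap_apply hab hp.2).resolve_right ?_⟩
    rintro ⟨h₂, h₁⟩
    rw [← eq_inv_iff_eq] at h₁ h₂
    exact hp.1.not_gt (h₁ ▸ h₂ ▸ hinv)
  · simpa using ⟨hinv, hab.lt⟩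
  · simpa using fun _ => hab.lt.le

theorem MoreOrdered.swap_mul {σ₁ σ₂ : Perm α} (h : σ₁.MoreOrdered σ₂) {a b : α} (hab : a ⋖ b)
    (hσ₁ : σ₁ (σ₂⁻¹ b) < σ₁ (σ₂⁻¹ a)) : σ₁.MoreOrdered (swap a b * σ₂) := by
  intro i j hij hσ
  rcases lt_or_eq_and_eq_of_swap_apply_lt_swap_apply hab hσ with hσ₂ | ⟨hi, hj⟩
  · exact h hij hσ₂
  · rw [← eq_inv_iff_eq] at hi hj
    exact hi ▸ hj ▸ hσ₁

theorem MoreOrdered.exists_covBy [Finite α] [SuccOrder α] [IsSuccArchimedean α]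
    {σ₁ σ₂ : Perm α} (h : σ₁.MoreOrdered σ₂) (hne : σ₁ ≠ σ₂) :
    ∃ a b, a ⋖ b ∧ σ₂⁻¹ b < σ₂⁻¹ a ∧ σ₁ (σ₂⁻¹ b) < σ₁ (σ₂⁻¹ a) := by
  by_contra! hcon
  refine hne (mul_inv_eq_one.1 <| DFunLike.coe_injective <| StrictMono.eq_id <|
    strictMono_of_lt_succ fun a ha => ?_)
  have hab := Order.covBy_succ_of_not_isMax ha
  have hpos : σ₂⁻¹ a ≠ σ₂⁻¹ (Order.succ a) := (σ₂⁻¹).injective.ne hab.ne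
  rcases hpos.lt_or_gt with hlt | hgt
  · exact h hlt (by simpa using hab.lt)
  · exact (hcon a _ hab hgt).lt_of_ne (σ₁.injective.ne hpos)

theorem MoreOrdered.sum_mul_comp_inv_le [Fintype α] [SuccOrder α] [IsSuccArchimedean α]
    {R : Type*} [CommRing R] [LinearOrder R] [IsStrictOrderedRing R] {r s : α → R}
    (hr : Antitone r) (hs : Antitone s) {σ₁ σ₂ : Perm α} (h : σ₁.MoreOrdered σ₂) :
    ∑ x, s x * r (σ₂⁻¹ x) ≤ ∑ x, s x * r (σ₁⁻¹ x) := by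
  induction hN : #σ₂.inversions using Nat.strong_induction_on generalizing σ₂ with
  | _ N ih =>
  subst hN
  obtain rfl | hne := eq_or_ne σ₁ σ₂
  · rfl
  obtain ⟨a, b, hab, hinv, hσ₁⟩ := h.exists_covBy hne
  calc ∑ x, s x * r (σ₂⁻¹ x)
      ≤ ∑ x, s x * r (σ₂⁻¹ (swap a b x)) :=
        sum_mul_le_sum_mul_comp_swap (hs hab.lt.le) (hr hinv.le)
    _ = ∑ x, s x * r ((swap a b * σ₂)⁻¹ x) := by simp
    _ ≤ ∑ x, s x * r (σ₁⁻¹ x) :=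
        ih _ (card_inversions_swap_mul_lt hab hinv) (h.swap_mul hab hσ₁) rfl

end Equiv.Perm

theorem generalized_rearrangement_general
    (n : ℕ) (r s : Fin n → ℝ)
    (hr : ∀ ⦃i j : Fin n⦄, i ≤ j → r j ≤ r i)
    (hs : ∀ ⦃i j : Fin n⦄, i ≤ j → s j ≤ s i)
    (σ1 σ2 : Equiv.Perm (Fin n))
    (hmore : ∀ ⦃i j : Fin n⦄, i < j → σ2 i < σ2 j → σ1 i < σ1 j) :
    ∑ x : Fin n, s x * r (σ2⁻¹ x) ≤ ∑ x : Fin n, s x * r (σ1⁻¹ x) :=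
  Perm.MoreOrdered.sum_mul_comp_inv_le hr hs hmore

/-- Generalized rearrangement inequality — a more ordered permutation
yields a weakly larger inner product with decreasing nonnegative weights. -/
theorem generalized_rearrangement
    (n : ℕ) (r s : Fin n → ℝ)
    (hr : ∀ ⦃i j : Fin n⦄, i ≤ j → r j ≤ r i)
    (hs : ∀ ⦃i j : Fin n⦄, i ≤ j → s j ≤ s i)
    (hs0 : ∀ i, 0 ≤ s i)
    (σ1 σ2 : Equiv.Perm (Fin n))
    (hmore : ∀ ⦃i j : Fin n⦄, i < j → σ2 i < σ2 j → σ1 i < σ1 j) :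
    ∑ x : Fin n, s x * r (σ2⁻¹ x) ≤ ∑ x : Fin n, s x * r (σ1⁻¹ x) :=
  generalized_rearrangement_general n r s hr hs σ1 σ2 hmore
end

section
/- Let F be an MHR distribution with inverse hazard rate λ and α-virtual value φα(v) = v - αλ(v), 0 ≤ α ≤ 1. Suppose for two advertisers with values v1, v2 > 0 and refined relevances p1, p2 ∈ (0,1] that is a flip-spread refinement of coarse relevances q1, q2, the refined ranking by realized α-virtual value (rank 1 above 2 iff p1·φα(v1) ≥ p2·φα(v2), both nonnegative) is more ordered with respect to refined realized values (p1·v1, p2·v2) than the coarse ranking (by q_i·φα(v_i)). That is: if p1·φα(v1) ≥ p2·φα(v2) ≥ 0 and q1·φα(v1) < q2·φα(v2), then p1·v1 ≥ p2·v2. -/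
/-- Contrapositive form of the key lemma — if the refined ranking
puts 1 above 2 (by realized α-virtual value) but the coarse ranking puts 2 above 1,
then advertiser 1 has higher refined realized value. -/
theorem refined_ranking_more_ordered
    (F f lam : ℝ → ℝ) (α : ℝ)
    (hF : ∀ v, 0 ≤ F v ∧ F v ≤ 1)
    (hf : ∀ v, 0 < f v)
    (hlam : ∀ v, lam v = (1 - F v) / f v)
    (hMHR : ∀ ⦃a b : ℝ⦄, a ≤ b → lam b ≤ lam a)
    (hα0 : 0 ≤ α) (hα1 : α ≤ 1)
    (φα : ℝ → ℝ) (hφα : ∀ v, φα v = v - α * lam v)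
    (p1 p2 q1 q2 : ℝ)
    (hp1 : 0 < p1) (hp1' : p1 ≤ 1) (hp2 : 0 < p2) (hp2' : p2 ≤ 1)
    (hq1 : 0 < q1) (hq2 : 0 < q2)
    (hsf : (p1 / p2 ≥ q1 / q2 ∧ q1 / q2 ≥ 1) ∨ (1 ≥ q1 / q2 ∧ q1 / q2 ≥ p1 / p2) ∨
           (p1 / p2 ≥ 1 ∧ 1 ≥ q1 / q2) ∨ (q1 / q2 ≥ 1 ∧ 1 ≥ p1 / p2))
    (v1 v2 : ℝ) (hv1 : 0 < v1) (hv2 : 0 < v2)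
    (hrefined : p1 * φα v1 ≥ p2 * φα v2) (hnn : p2 * φα v2 ≥ 0)
    (hcoarse : q1 * φα v1 < q2 * φα v2) :
    p1 * v1 ≥ p2 * v2 := by
  have hl1 : 0 ≤ lam v1 := by
    rw [hlam]; exact div_nonneg (by linarith [(hF v1).2]) (hf v1).le
  have hl2 : 0 ≤ lam v2 := by
    rw [hlam]; exact div_nonneg (by linarith [(hF v2).2]) (hf v2).le
  have hph2nn : 0 ≤ φα v2 := by nlinarith
  have hph2pos : 0 < φα v2 := by
    rcases hph2nn.lt_or_eq with h | h
    · exact h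
    · exfalso
      have h1 : q1 * φα v1 < 0 := by rw [← h] at hcoarse; linarith
      have h2 : φα v1 < 0 := by nlinarith
      nlinarith
  have hph1pos : 0 < φα v1 := by nlinarith
  have key : p2 * q1 < p1 * q2 := by
    nlinarith [mul_nonneg (sub_nonneg.2 hrefined) (mul_pos hq2 hph2pos).le,
      mul_pos (mul_pos hp2 hph2pos) (sub_pos.2 hcoarse),
      mul_pos hph1pos hph2pos]
  have hp12 : p2 ≤ p1 := by
    rcases hsf with ⟨h1, h2⟩ | ⟨h1, h2⟩ | ⟨h1, h2⟩ | ⟨h1, h2⟩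
    · have : (1:ℝ) ≤ p1 / p2 := le_trans h2 h1
      rw [le_div_iff₀ hp2] at this; linarith
    · exfalso
      rw [ge_iff_le, div_le_div_iff₀ hp2 hq2] at h2
      nlinarith
    · rw [ge_iff_le, le_div_iff₀ hp2] at h1; linarith
    · exfalso
      have : p1 / p2 ≤ q1 / q2 := le_trans h2 h1
      rw [div_le_div_iff₀ hp2 hq2] at this
      nlinarith
  rcases le_or_gt v2 v1 with h | h
  · nlinarith
  · have hlam12 : lam v2 ≤ lam v1 := hMHR h.le
    have hplam : p2 * lam v2 ≤ p1 * lam v1 := by nlinarith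
    rw [hφα v1, hφα v2] at hrefined
    nlinarith [mul_nonneg hα0 (sub_nonneg.2 hplam)]
end
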